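/- arXiv:2404.16412 — 4 statements merged into one kernel-verified Lean document; each statement's English description precedes it below -/
import Mathlib

section
/- Proposition 1: Let x_0, x_1, …, x_N : [0,T) → ℝⁿ be arbitrary functions and define η_k(t) = Λ_{r(t)}(x_k(t) − x_0(t)) for k = 1,…,N and η(t) = (η_1(t)ᵀ,…,η_N(t)ᵀ)ᵀ ∈ ℝ^{nN}. If there exists a class-KL function β such that |η(t)| ≤ β(|η(0)|, τ(t)) for all t ∈ [0,T), then prescribed-time consensus holds in the sense of Definition 1: there exist a class-KL function β′ and a function μ : [0,T) → [0,∞) with μ(t) → ∞ as t → T⁻ such that, writing x̄(t) = ((x_1(t)−x_0(t))ᵀ,…,(x_N(t)−x_0(t))ᵀ)ᵀ, one has |x̄(t)| ≤ β′(|x̄(0)|, μ(t)) for all t ∈ [0,T); in particular x_k(t) − x_0(t) → 0 as t → T⁻ for each k. -/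
open Filter Set

/-- The Euclidean norm of a finitely-indexed real vector. -/
noncomputable def enorm' {ι : Type*} [Fintype ι] (v : ι → ℝ) : ℝ :=
  Real.sqrt (∑ i, v i ^ 2)

/-- A class-KL function `β : [0,∞) × [0,∞) → [0,∞)`: continuous, strictly increasing
to each `β(·,τ)` with `β(0,τ) = 0`, and nonincreasing in `τ` with `β(s,τ) → 0` as
`τ → ∞`. -/
def IsClassKL (β : ℝ → ℝ → ℝ) : Prop :=
  ContinuousOn (fun q : ℝ × ℝ => β q.1 q.2) (Set.Ici 0 ×ˢ Set.Ici 0) ∧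
  (∀ s τ, 0 ≤ s → 0 ≤ τ → 0 ≤ β s τ) ∧
  (∀ τ, 0 ≤ τ → StrictMonoOn (fun s => β s τ) (Set.Ici 0)) ∧
  (∀ τ, 0 ≤ τ → β 0 τ = 0) ∧
  (∀ s, 0 ≤ s → AntitoneOn (fun τ => β s τ) (Set.Ici 0)) ∧
  (∀ s, 0 ≤ s → Tendsto (fun τ => β s τ) atTop (nhds 0))

lemma enorm'_nonneg {ι : Type*} [Fintype ι] (v : ι → ℝ) : 0 ≤ enorm' v :=
  Real.sqrt_nonneg _

lemma enorm'_le_mul {ι : Type*} [Fintype ι] {u v : ι → ℝ} {c : ℝ} (hc : 0 ≤ c)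
    (h : ∀ i, |u i| ≤ c * |v i|) : enorm' u ≤ c * enorm' v := by
  have key : enorm' u ≤ Real.sqrt (c ^ 2 * ∑ i, v i ^ 2) := by
    apply Real.sqrt_le_sqrt
    rw [Finset.mul_sum]
    apply Finset.sum_le_sum
    intro i _
    calc u i ^ 2 = |u i| ^ 2 := (sq_abs _).symm
      _ ≤ (c * |v i|) ^ 2 := pow_le_pow_left₀ (abs_nonneg _) (h i) 2
      _ = c ^ 2 * v i ^ 2 := by rw [mul_pow, sq_abs]
  rwa [Real.sqrt_mul (sq_nonneg c), Real.sqrt_sq hc] at key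

/-- Proposition 1. -/
theorem proposition_1 (n N : ℕ) (hn : 0 < n) (hN : 0 < N)
    (T b : ℝ) (hT : 0 < T) (hb : T ≤ b)
    (x : Fin (N + 1) → ℝ → (Fin n → ℝ))
    (η : ℝ → (Fin N × Fin n → ℝ))
    (hη : ∀ t (ki : Fin N × Fin n),
      η t ki = (b / (T - t)) ^ (n - (ki.2 : ℕ)) * (x ki.1.succ t ki.2 - x 0 t ki.2))
    (β : ℝ → ℝ → ℝ) (hβ : IsClassKL β)
    (hbound : ∀ t ∈ Set.Ico (0 : ℝ) T,
      enorm' (η t) ≤ β (enorm' (η 0)) (Real.log (T / (T - t)))) :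
    ∃ β' : ℝ → ℝ → ℝ, ∃ μ : ℝ → ℝ, IsClassKL β' ∧
      (∀ t ∈ Set.Ico (0 : ℝ) T, 0 ≤ μ t) ∧
      Tendsto μ (nhdsWithin T (Set.Iio T)) atTop ∧
      (∀ t ∈ Set.Ico (0 : ℝ) T,
        enorm' (fun ki : Fin N × Fin n => x ki.1.succ t ki.2 - x 0 t ki.2) ≤
          β' (enorm' (fun ki : Fin N × Fin n => x ki.1.succ 0 ki.2 - x 0 0 ki.2))
            (μ t)) ∧
      (∀ k : Fin N,
        Tendsto (fun t => enorm' (fun i => x k.succ t i - x 0 t i))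
          (nhdsWithin T (Set.Iio T)) (nhds 0)) := by
  obtain ⟨hcont, hnn, hsm, hzero, hanti, htend⟩ := hβ
  set c : ℝ := (b / T) ^ n with hc
  have hbT : (1 : ℝ) ≤ b / T := (one_le_div hT).mpr hb
  have hc1 : (1 : ℝ) ≤ c := one_le_pow₀ hbT
  have hc0 : (0 : ℝ) < c := lt_of_lt_of_le one_pos hc1
  set μ : ℝ → ℝ := fun t => Real.log (T / (T - t)) with hμdef
  set β' : ℝ → ℝ → ℝ := fun s τ => β (c * s) τ with hβ'def
  set xb : ℝ → (Fin N × Fin n → ℝ) :=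
    fun t ki => x ki.1.succ t ki.2 - x 0 t ki.2 with hxb
  set s0 : ℝ := enorm' (xb 0) with hs0
  have hs0nn : 0 ≤ s0 := enorm'_nonneg _
  -- μ is nonnegative on [0, T)
  have hμnn : ∀ t ∈ Set.Ico (0 : ℝ) T, 0 ≤ μ t := by
    intro t ht
    apply Real.log_nonneg
    rw [le_div_iff₀ (by linarith [ht.2] : (0:ℝ) < T - t)]
    linarith [ht.1]
  -- η 0 is bounded by c * s0
  have hη0 : enorm' (η 0) ≤ c * s0 := by
    apply enorm'_le_mul hc0.le
    intro ki
    rw [hη 0 ki]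
    have hpos : (0:ℝ) < b / T := lt_of_lt_of_le one_pos hbT
    rw [sub_zero, abs_mul, abs_of_pos (pow_pos hpos _)]
    have hle : (b / T) ^ (n - (ki.2 : ℕ)) ≤ c :=
      pow_le_pow_right₀ hbT (Nat.sub_le n _)
    exact mul_le_mul_of_nonneg_right hle (abs_nonneg _)
  have hη0nn : 0 ≤ enorm' (η 0) := enorm'_nonneg _
  -- μ → atTop as t → T⁻
  have hμtop : Tendsto μ (nhdsWithin T (Set.Iio T)) atTop := by
    have h1 : Tendsto (fun t => T - t) (nhdsWithin T (Set.Iio T))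
        (nhdsWithin 0 (Set.Ioi 0)) := by
      rw [tendsto_nhdsWithin_iff]
      constructor
      · have h0 : Tendsto (fun t : ℝ => T - t) (nhds T) (nhds (T - T)) :=
          tendsto_const_nhds.sub tendsto_id
        rw [sub_self] at h0
        exact h0.mono_left nhdsWithin_le_nhds
      · filter_upwards [self_mem_nhdsWithin] with t ht
        exact sub_pos.mpr (Set.mem_Iio.mp ht)
    have h2 : Tendsto (fun t => Real.log (T - t)) (nhdsWithin T (Set.Iio T)) atBot :=
      Real.tendsto_log_nhdsGT_zero.comp h1
    have h3 : Tendsto (fun t => Real.log T + -Real.log (T - t))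
        (nhdsWithin T (Set.Iio T)) atTop :=
      tendsto_atTop_add_const_left _ _ (tendsto_neg_atTop_iff.mpr h2)
    apply h3.congr'
    filter_upwards [self_mem_nhdsWithin] with t ht
    have hTt : T - t ≠ 0 := by
      have : t < T := ht
      exact ne_of_gt (by linarith)
    rw [hμdef]
    simp only
    rw [Real.log_div (ne_of_gt hT) hTt]
    ring
  -- main estimate
  have hmain : ∀ t ∈ Set.Ico (0 : ℝ) T, enorm' (xb t) ≤ β' s0 (μ t) := by
    intro t ht
    have hTt : (0:ℝ) < T - t := by linarith [ht.2]
    have hr1 : (1:ℝ) ≤ b / (T - t) := by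
      rw [le_div_iff₀ hTt]; linarith [ht.1]
    have step1 : enorm' (xb t) ≤ enorm' (η t) := by
      have := enorm'_le_mul (u := xb t) (v := η t) (c := 1) zero_le_one ?_
      · simpa using this
      · intro ki
        rw [hη t ki, one_mul, abs_mul,
          abs_of_pos (pow_pos (lt_of_lt_of_le one_pos hr1) _)]
        have h1le : (1:ℝ) ≤ (b / (T - t)) ^ (n - (ki.2 : ℕ)) :=
          one_le_pow₀ hr1
        calc |xb t ki| = 1 * |xb t ki| := (one_mul _).symm
          _ ≤ (b / (T - t)) ^ (n - (ki.2 : ℕ)) * |xb t ki| :=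
            mul_le_mul_of_nonneg_right h1le (abs_nonneg _)
    have step2 : enorm' (η t) ≤ β (enorm' (η 0)) (μ t) := hbound t ht
    have step3 : β (enorm' (η 0)) (μ t) ≤ β (c * s0) (μ t) :=
      (hsm (μ t) (hμnn t ht)).monotoneOn hη0nn (mul_nonneg hc0.le hs0nn) hη0
    exact le_trans (le_trans step1 step2) step3
  refine ⟨β', μ, ?_, hμnn, hμtop, ?_, ?_⟩
  · -- β' is class KL
    refine ⟨?_, ?_, ?_, ?_, ?_, ?_⟩
    · have heq : (fun q : ℝ × ℝ => β' q.1 q.2)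
          = (fun q : ℝ × ℝ => β q.1 q.2) ∘ (fun q : ℝ × ℝ => (c * q.1, q.2)) := rfl
      rw [heq]
      apply hcont.comp
        ((continuous_const.mul continuous_fst).prodMk continuous_snd).continuousOn
      intro q hq
      exact ⟨mul_nonneg hc0.le hq.1, hq.2⟩
    · intro s τ hs hτ; exact hnn _ _ (mul_nonneg hc0.le hs) hτ
    · intro τ hτ s1 hs1 s2 hs2 h12
      exact hsm τ hτ (mul_nonneg hc0.le hs1) (mul_nonneg hc0.le hs2)
        ((mul_lt_mul_iff_right₀ hc0).mpr h12)
    · intro τ hτ; simp only [hβ'def, mul_zero]; exact hzero τ hτ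
    · intro s hs; exact hanti _ (mul_nonneg hc0.le hs)
    · intro s hs; exact htend _ (mul_nonneg hc0.le hs)
  · exact hmain
  · -- convergence of each follower
    intro k
    have hgt : Tendsto (fun t => β' s0 (μ t)) (nhdsWithin T (Set.Iio T)) (nhds 0) :=
      (htend (c * s0) (mul_nonneg hc0.le hs0nn)).comp hμtop
    have hev : Set.Ioo 0 T ∈ nhdsWithin T (Set.Iio T) :=
      Ioo_mem_nhdsLT_of_mem ⟨hT, le_refl T⟩
    apply squeeze_zero' ?_ ?_ hgt
    · filter_upwards with t; exact enorm'_nonneg _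
    · filter_upwards [hev] with t ht
      have ht' : t ∈ Set.Ico (0:ℝ) T := ⟨ht.1.le, ht.2⟩
      refine le_trans ?_ (hmain t ht')
      apply Real.sqrt_le_sqrt
      rw [Fintype.sum_prod_type]
      exact Finset.single_le_sum (f := fun k' => ∑ i, xb t (k', i) ^ 2)
        (fun k' _ => Finset.sum_nonneg fun i _ => sq_nonneg _) (Finset.mem_univ k)
end

section
/- Proposition 2: Let x_0,…,x_N : [0,T) → ℝⁿ and x̂_0,…,x̂_N : [0,T) → ℝⁿ (observer states) be arbitrary functions; define η̂_k(t) = Λ_{r(t)}(x̂_k(t) − x̂_0(t)) and ε_k(t) = Λ_{r(t)}(x_k(t) − x_0(t)) − η̂_k(t) for k = 1,…,N, with stacked vectors η̂(t), ε(t) ∈ ℝ^{nN}. If there exists a class-KL function β such that |η̂(t) + ε(t)| ≤ β(|η̂(0) + ε(0)|, τ(t)) for all t ∈ [0,T), then prescribed-time consensus holds in the sense of Definition 1: there exist a class-KL function β′ and a function μ : [0,T) → [0,∞) with μ(t) → ∞ as t → T⁻ such that, writing x̄(t) = ((x_1(t)−x_0(t))ᵀ,…,(x_N(t)−x_0(t))ᵀ)ᵀ,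 one has |x̄(t)| ≤ β′(|x̄(0)|, μ(t)) for all t ∈ [0,T); in particular x_k(t) − x_0(t) → 0 as t → T⁻ for each k. -/
open Filter Set

lemma enorm'_mono {ι : Type*} [Fintype ι] {v w : ι → ℝ}
    (h : ∀ i, v i ^ 2 ≤ w i ^ 2) : enorm' v ≤ enorm' w :=
  Real.sqrt_le_sqrt (Finset.sum_le_sum fun i _ => h i)

lemma enorm'_const_mul {ι : Type*} [Fintype ι] (c : ℝ) (v : ι → ℝ) :
    enorm' (fun i => c * v i) = |c| * enorm' v := by
  unfold enorm'
  rw [← Real.sqrt_sq_eq_abs, ← Real.sqrt_mul (sq_nonneg c)]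
  congr 1
  rw [Finset.mul_sum]
  exact Finset.sum_congr rfl fun i _ => by ring

lemma enorm'_sub_le {κ ι : Type*} [Fintype κ] [Fintype ι] (v : κ × ι → ℝ) (k : κ) :
    enorm' (fun i => v (k, i)) ≤ enorm' v := by
  apply Real.sqrt_le_sqrt
  rw [Fintype.sum_prod_type]
  exact Finset.single_le_sum (f := fun k' => ∑ i, v (k', i) ^ 2)
    (fun _ _ => Finset.sum_nonneg fun _ _ => sq_nonneg _) (Finset.mem_univ k)

/-- Proposition 2: with observer states `x̂_k`, scaled observer differences
`η̂_k(t) = Λ_{r(t)}(x̂_k(t) - x̂_0(t))` and scaled observation errors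
`ε_k(t) = Λ_{r(t)}(x_k(t) - x_0(t)) - η̂_k(t)` (stacked over the followers, with
`r(t) = b/(T-t)`, `Λ_r = diag(rⁿ,…,r)`), a class-KL estimate
`|η̂(t) + ε(t)| ≤ β(|η̂(0) + ε(0)|, τ(t))` with `τ(t) = ln(T/(T-t))` implies
prescribed-time consensus in the sense of Definition 1: there are a class-KL
function `β'` and `μ : [0,T) → [0,∞)` with `μ(t) → ∞` as `t → T⁻` such that the
stacked tracking error `x̄` satisfies `|x̄(t)| ≤ β'(|x̄(0)|, μ(t))` on `[0,T)`;
in particular `x_k(t) - x_0(t) → 0` as `t → T⁻` for each follower `k`. -/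
theorem proposition_2 (n N : ℕ) (hn : 0 < n) (hN : 0 < N)
    (T b : ℝ) (hT : 0 < T) (hb : T ≤ b)
    (x xhat : Fin (N + 1) → ℝ → (Fin n → ℝ))
    (ηhat ε : ℝ → (Fin N × Fin n → ℝ))
    (hηhat : ∀ t (ki : Fin N × Fin n),
      ηhat t ki =
        (b / (T - t)) ^ (n - (ki.2 : ℕ)) * (xhat ki.1.succ t ki.2 - xhat 0 t ki.2))
    (hε : ∀ t (ki : Fin N × Fin n),
      ε t ki =
        (b / (T - t)) ^ (n - (ki.2 : ℕ)) * (x ki.1.succ t ki.2 - x 0 t ki.2) -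
          ηhat t ki)
    (β : ℝ → ℝ → ℝ) (hβ : IsClassKL β)
    (hbound : ∀ t ∈ Set.Ico (0 : ℝ) T,
      enorm' (fun ki => ηhat t ki + ε t ki) ≤
        β (enorm' (fun ki => ηhat 0 ki + ε 0 ki)) (Real.log (T / (T - t)))) :
    ∃ β' : ℝ → ℝ → ℝ, ∃ μ : ℝ → ℝ, IsClassKL β' ∧
      (∀ t ∈ Set.Ico (0 : ℝ) T, 0 ≤ μ t) ∧
      Tendsto μ (nhdsWithin T (Set.Iio T)) atTop ∧
      (∀ t ∈ Set.Ico (0 : ℝ) T,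
        enorm' (fun ki : Fin N × Fin n => x ki.1.succ t ki.2 - x 0 t ki.2) ≤
          β' (enorm' (fun ki : Fin N × Fin n => x ki.1.succ 0 ki.2 - x 0 0 ki.2))
            (μ t)) ∧
      (∀ k : Fin N,
        Tendsto (fun t => enorm' (fun i => x k.succ t i - x 0 t i))
          (nhdsWithin T (Set.Iio T)) (nhds 0)) := by
  obtain ⟨hβcont, hβpos, hβmono, hβzero, hβanti, hβtend⟩ := hβ
  set c : ℝ := (b / T) ^ n with hc_def
  have hbT : (1 : ℝ) ≤ b / T := (one_le_div hT).2 hb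
  have hc1 : (1 : ℝ) ≤ c := one_le_pow₀ hbT
  have hc0 : (0 : ℝ) < c := lt_of_lt_of_le one_pos hc1
  -- the ratio r(t) is ≥ 1 on [0,T)
  have hr1 : ∀ t ∈ Set.Ico (0 : ℝ) T, (1 : ℝ) ≤ b / (T - t) := by
    intro t ht
    have hTt : 0 < T - t := sub_pos.2 ht.2
    exact (one_le_div hTt).2 (le_trans (by linarith [ht.1]) hb)
  -- η + ε = scaled tracking error
  have hsum : ∀ t (ki : Fin N × Fin n),
      ηhat t ki + ε t ki =
        (b / (T - t)) ^ (n - (ki.2 : ℕ)) * (x ki.1.succ t ki.2 - x 0 t ki.2) := by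
    intro t ki
    rw [hε t ki]; ring
  set xb : ℝ → Fin N × Fin n → ℝ :=
    fun t ki => x ki.1.succ t ki.2 - x 0 t ki.2 with hxb_def
  set s₀ : ℝ := enorm' (xb 0) with hs₀_def
  have hs₀ : 0 ≤ s₀ := enorm'_nonneg _
  -- |η(0)+ε(0)| ≤ c * s₀
  have hinit : enorm' (fun ki => ηhat 0 ki + ε 0 ki) ≤ c * s₀ := by
    calc enorm' (fun ki => ηhat 0 ki + ε 0 ki)
        ≤ enorm' (fun ki => c * xb 0 ki) := by
          apply enorm'_mono
          intro ki
          rw [hsum 0 ki]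
          have h0 : (b / (T - 0)) = b / T := by norm_num
          rw [h0]
          have h1 : (0:ℝ) ≤ (b / T) ^ (n - (ki.2 : ℕ)) :=
            pow_nonneg (by linarith) _
          have h2 : (b / T) ^ (n - (ki.2 : ℕ)) ≤ c :=
            pow_le_pow_right₀ hbT (Nat.sub_le n _)
          calc ((b / T) ^ (n - (ki.2 : ℕ)) * xb 0 ki) ^ 2
              = ((b / T) ^ (n - (ki.2 : ℕ))) ^ 2 * (xb 0 ki) ^ 2 := by ring
            _ ≤ c ^ 2 * (xb 0 ki) ^ 2 := by
                exact mul_le_mul_of_nonneg_right (pow_le_pow_left₀ h1 h2 2) (sq_nonneg _)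
            _ = (c * xb 0 ki) ^ 2 := by ring
      _ = c * s₀ := by rw [enorm'_const_mul, abs_of_pos hc0]
  refine ⟨fun s τ => β (c * s) τ, fun t => Real.log (T / (T - t)), ?_, ?_, ?_, ?_, ?_⟩
  · -- β' is class KL
    refine ⟨?_, ?_, ?_, ?_, ?_, ?_⟩
    · have : ContinuousOn (fun q : ℝ × ℝ => (c * q.1, q.2))
          (Set.Ici (0:ℝ) ×ˢ Set.Ici (0:ℝ)) := by fun_prop
      apply hβcont.comp this
      rintro ⟨s, τ⟩ ⟨hs, hτ⟩
      exact ⟨mul_nonneg hc0.le hs, hτ⟩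
    · intro s τ hs hτ; exact hβpos _ _ (mul_nonneg hc0.le hs) hτ
    · intro τ hτ s₁ hs₁ s₂ hs₂ h12
      exact hβmono τ hτ (mul_nonneg hc0.le hs₁) (mul_nonneg hc0.le hs₂)
        (by exact mul_lt_mul_of_pos_left h12 hc0)
    · intro τ hτ; simpa using hβzero τ hτ
    · intro s hs; exact hβanti _ (mul_nonneg hc0.le hs)
    · intro s hs; exact hβtend _ (mul_nonneg hc0.le hs)
  · -- μ ≥ 0
    intro t ht
    apply Real.log_nonneg
    rw [one_le_div (sub_pos.2 ht.2)]
    linarith [ht.1]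
  · -- μ → ∞
    have h1 : Tendsto (fun t : ℝ => T - t) (nhdsWithin T (Set.Iio T))
        (nhdsWithin 0 (Set.Ioi 0)) := by
      apply tendsto_nhdsWithin_of_tendsto_nhds_of_eventually_within
      · have : Tendsto (fun t : ℝ => T - t) (nhds T) (nhds (T - T)) :=
          (continuous_const.sub continuous_id).tendsto T
        simpa using this.mono_left nhdsWithin_le_nhds
      · filter_upwards [self_mem_nhdsWithin] with t ht
        exact sub_pos.2 (mem_Iio.mp ht)
    have h2 : Tendsto (fun t : ℝ => (T - t)⁻¹) (nhdsWithin T (Set.Iio T)) atTop :=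
      tendsto_inv_nhdsGT_zero.comp h1
    have h3 : Tendsto (fun t : ℝ => T / (T - t)) (nhdsWithin T (Set.Iio T)) atTop := by
      simpa [div_eq_mul_inv] using h2.const_mul_atTop hT
    exact Real.tendsto_log_atTop.comp h3
  · -- main bound
    intro t ht
    have hμt : 0 ≤ Real.log (T / (T - t)) := by
      apply Real.log_nonneg
      rw [one_le_div (sub_pos.2 ht.2)]
      linarith [ht.1]
    have step1 : enorm' (xb t) ≤ enorm' (fun ki => ηhat t ki + ε t ki) := by
      apply enorm'_mono
      intro ki
      rw [hsum t ki]
      have hr := hr1 t ht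
      have h1 : (1:ℝ) ≤ (b / (T - t)) ^ (n - (ki.2 : ℕ)) := one_le_pow₀ hr
      calc (xb t ki) ^ 2
          = 1 * (xb t ki) ^ 2 := by ring
        _ ≤ ((b / (T - t)) ^ (n - (ki.2 : ℕ))) ^ 2 * (xb t ki) ^ 2 := by
            apply mul_le_mul_of_nonneg_right _ (sq_nonneg _)
            calc (1:ℝ) = 1 ^ 2 := by ring
              _ ≤ ((b / (T - t)) ^ (n - (ki.2 : ℕ))) ^ 2 :=
                  pow_le_pow_left₀ one_pos.le h1 2
        _ = ((b / (T - t)) ^ (n - (ki.2 : ℕ)) * xb t ki) ^ 2 := by ring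
    have step2 := hbound t ht
    have step3 : β (enorm' (fun ki => ηhat 0 ki + ε 0 ki)) (Real.log (T / (T - t)))
        ≤ β (c * s₀) (Real.log (T / (T - t))) :=
      (hβmono _ hμt).monotoneOn (enorm'_nonneg _) (mul_nonneg hc0.le hs₀) hinit
    exact le_trans step1 (le_trans step2 step3)
  · -- convergence of each follower
    intro k
    have hβ'tend : Tendsto (fun t => β (c * s₀) (Real.log (T / (T - t))))
        (nhdsWithin T (Set.Iio T)) (nhds 0) := by
      apply (hβtend _ (mul_nonneg hc0.le hs₀)).comp
      -- μ → ∞ (same as above)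
      have h1 : Tendsto (fun t : ℝ => T - t) (nhdsWithin T (Set.Iio T))
          (nhdsWithin 0 (Set.Ioi 0)) := by
        apply tendsto_nhdsWithin_of_tendsto_nhds_of_eventually_within
        · have : Tendsto (fun t : ℝ => T - t) (nhds T) (nhds (T - T)) :=
            (continuous_const.sub continuous_id).tendsto T
          simpa using this.mono_left nhdsWithin_le_nhds
        · filter_upwards [self_mem_nhdsWithin] with t ht
          exact sub_pos.2 (mem_Iio.mp ht)
      have h2 : Tendsto (fun t : ℝ => (T - t)⁻¹) (nhdsWithin T (Set.Iio T)) atTop :=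
        tendsto_inv_nhdsGT_zero.comp h1
      have h3 : Tendsto (fun t : ℝ => T / (T - t)) (nhdsWithin T (Set.Iio T)) atTop := by
        simpa [div_eq_mul_inv] using h2.const_mul_atTop hT
      exact Real.tendsto_log_atTop.comp h3
    have hmem : Set.Ioo 0 T ∈ nhdsWithin T (Set.Iio T) := by
      have : Set.Ioi (0:ℝ) ∩ Set.Iio T ∈ nhdsWithin T (Set.Iio T) :=
        Filter.inter_mem (mem_nhdsWithin_of_mem_nhds (Ioi_mem_nhds hT))
          self_mem_nhdsWithin
      simpa [Set.Ioi_inter_Iio] using this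
    apply squeeze_zero' (Filter.Eventually.of_forall fun t => enorm'_nonneg _)
      _ hβ'tend
    filter_upwards [hmem] with t ht
    have ht' : t ∈ Set.Ico (0:ℝ) T := ⟨ht.1.le, ht.2⟩
    have hμt : 0 ≤ Real.log (T / (T - t)) := by
      apply Real.log_nonneg
      rw [one_le_div (sub_pos.2 ht.2)]
      linarith [ht.1.le]
    calc enorm' (fun i => x k.succ t i - x 0 t i)
        = enorm' (fun i => xb t (k, i)) := rfl
      _ ≤ enorm' (xb t) := enorm'_sub_le _ k
      _ ≤ enorm' (fun ki => ηhat t ki + ε t ki) := by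
          apply enorm'_mono
          intro ki
          rw [hsum t ki]
          have hr := hr1 t ht'
          have h1 : (1:ℝ) ≤ (b / (T - t)) ^ (n - (ki.2 : ℕ)) := one_le_pow₀ hr
          calc (xb t ki) ^ 2
              = 1 * (xb t ki) ^ 2 := by ring
            _ ≤ ((b / (T - t)) ^ (n - (ki.2 : ℕ))) ^ 2 * (xb t ki) ^ 2 := by
                apply mul_le_mul_of_nonneg_right _ (sq_nonneg _)
                calc (1:ℝ) = 1 ^ 2 := by ring
                  _ ≤ ((b / (T - t)) ^ (n - (ki.2 : ℕ))) ^ 2 :=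
                      pow_le_pow_left₀ one_pos.le h1 2
            _ = ((b / (T - t)) ^ (n - (ki.2 : ℕ)) * xb t ki) ^ 2 := by ring
      _ ≤ β (enorm' (fun ki => ηhat 0 ki + ε 0 ki)) (Real.log (T / (T - t))) :=
          hbound t ht'
      _ ≤ β (c * s₀) (Real.log (T / (T - t))) :=
          (hβmono _ hμt).monotoneOn (enorm'_nonneg _) (mul_nonneg hc0.le hs₀) hinit
end

section
/- Time-axis transformation of the scaled error dynamics (proof of Proposition 1): Let u : [0,T) → ℝ be continuous, let f, f_0 : [0,T)×ℝⁿ → ℝⁿ, and let x, x_0 : [0,T) → ℝⁿ be differentiable with ẋ(t) = A x(t) + B u(t) + f(t, x(t)) and ẋ_0(t) = A x_0(t) + f_0(t, x_0(t)). Define η(t) ∈ ℝⁿ by η_i(t) = r(t)^{n−i+1}(x_i(t) − x_{0,i}(t)) for i = 1,…,n, and Φ(t) ∈ ℝⁿ by Φ_i(t) = r(t)^{n−i}( f_i(t,x(t)) − f_{0,i}(t,x_0(t)) ). Then the reparametrized function η̃(τ) := η(t(τ)) with t(τ) = T(1−e^{−τ}) is differentiable on [0,∞) and satisfies, for all τ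 ≥ 0, dη̃/dτ (τ) = b ( A η̃(τ) + B u(t(τ)) + Φ(t(τ)) ) + D_c η̃(τ). -/
/-!
Under `t = T(1 - e^{-τ})` one has `dt/dτ = T - t`, hence `dr/dτ = r` and `(T - t) r = b`.
Differentiating `η̃_i = r^{n-i+1} (x_i - x_{0,i})` in `τ`, the factor `r^{n-i+1}` yields
`(n-i+1) η̃_i`, i.e. `D_c η̃`; in the other term one power of `r` is traded for `b`, and the
remaining `r^{n-i}` turns the shift `A (x - x_0)` into `A η̃`, the error `f - f_0` into `Φ`,
and leaves `B` alone since `B` lives in the last coordinate.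
-/

open Matrix Set Real

noncomputable def timeReparam (T σ : ℝ) : ℝ := T * (1 - exp (-σ))

lemma sub_timeReparam (T σ : ℝ) : T - timeReparam T σ = T * exp (-σ) := by
  unfold timeReparam; ring

lemma mapsTo_timeReparam {T : ℝ} (hT : 0 < T) : MapsTo (timeReparam T) (Ici 0) (Ico 0 T) := by
  intro σ hσ
  have hsub := sub_timeReparam T σ
  have hpos : 0 < T * exp (-σ) := by positivity
  have hle : T * exp (-σ) ≤ T :=
    mul_le_of_le_one_right hT.le (exp_le_one_iff.mpr (neg_nonpos.mpr hσ))
  exact ⟨by linarith, by linarith⟩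

lemma hasDerivAt_timeReparam (T τ : ℝ) :
    HasDerivAt (timeReparam T) (T - timeReparam T τ) τ := by
  rw [sub_timeReparam]
  refine (((hasDerivAt_neg τ).exp.const_sub 1).const_mul T).congr_deriv ?_
  ring

lemma hasDerivAt_div_sub_pow (b T t : ℝ) (k : ℕ) (ht : T - t ≠ 0) :
    HasDerivAt (fun s => (b / (T - s)) ^ (k + 1))
      ((k + 1) * (b / (T - t)) ^ (k + 1) / (T - t)) t := by
  have hr : HasDerivAt (fun s => b / (T - s)) (b / (T - t) / (T - t)) t := by
    refine ((hasDerivAt_const t b).div ((hasDerivAt_id t).const_sub T) ht).congr_deriv ?_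
    simp only [id]
    field_simp
    ring
  refine (hr.pow (k + 1)).congr_deriv ?_
  rw [Nat.add_sub_cancel, pow_succ]
  push_cast
  ring

lemma hasDerivWithinAt_scaled_comp_timeReparam {T b τ : ℝ} (hT : 0 < T) (k : ℕ)
    {g : ℝ → ℝ} {g' : ℝ} (hg : HasDerivWithinAt g g' (Ico 0 T) (timeReparam T τ)) :
    HasDerivWithinAt (fun σ => (b / (T - timeReparam T σ)) ^ (k + 1) * g (timeReparam T σ))
      ((k + 1) * ((b / (T - timeReparam T τ)) ^ (k + 1) * g (timeReparam T τ)) +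
        b * ((b / (T - timeReparam T τ)) ^ k * g')) (Ici 0) τ := by
  have hne : T - timeReparam T τ ≠ 0 := by
    rw [sub_timeReparam]; positivity
  have hprod := ((hasDerivAt_div_sub_pow b T _ k hne).hasDerivWithinAt.mul hg).comp τ
    (hasDerivAt_timeReparam T τ).hasDerivWithinAt (mapsTo_timeReparam hT)
  refine hprod.congr_deriv ?_
  rw [pow_succ]
  field_simp

section Shift

variable {R : Type*} [CommSemiring R] {n : ℕ}

lemma shift_mulVec_apply {A : Matrix (Fin n) (Fin n) R}
    (hA : ∀ i j : Fin n, A i j = if (i : ℕ) + 1 = (j : ℕ) then 1 else 0)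
    (v : Fin n → R) (i : Fin n) :
    (A *ᵥ v) i = if h : (i : ℕ) + 1 < n then v ⟨i + 1, h⟩ else 0 := by
  simp only [mulVec, dotProduct, hA, ite_mul, one_mul, zero_mul]
  split_ifs with h
  · rw [Finset.sum_eq_single ⟨i + 1, h⟩] <;> simp +contextual [Fin.ext_iff, eq_comm]
  · exact Finset.sum_eq_zero fun j _ => if_neg fun hj : (i : ℕ) + 1 = j => h (hj ▸ j.isLt)

lemma shift_mulVec_pow_smul {A : Matrix (Fin n) (Fin n) R}
    (hA : ∀ i j : Fin n, A i j = if (i : ℕ) + 1 = (j : ℕ) then 1 else 0)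
    (r : R) (v : Fin n → R) (i : Fin n) :
    (A *ᵥ fun j => r ^ (n - (j : ℕ)) * v j) i = r ^ (n - 1 - (i : ℕ)) * (A *ᵥ v) i := by
  rw [shift_mulVec_apply hA, shift_mulVec_apply hA]
  split_ifs with h
  · congr 2
    show n - (i + 1) = n - 1 - i
    omega
  · simp

lemma pow_mul_lastBasis_apply {B : Fin n → R}
    (hB : ∀ i : Fin n, B i = if (i : ℕ) = n - 1 then 1 else 0) (r : R) (i : Fin n) :
    r ^ (n - 1 - (i : ℕ)) * B i = B i := by
  rw [hB]
  split_ifs with h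
  · simp [h]
  · simp

end Shift

/-- Indices are 0-based: the exponents `n - i` and `n - 1 - i` are the paper's `n - i + 1`
and `n - i`. -/
theorem time_axis_transformation_general (n : ℕ)
    (T b : ℝ) (hT : 0 < T)
    (A : Matrix (Fin n) (Fin n) ℝ)
    (hA : ∀ i j : Fin n, A i j = if (i : ℕ) + 1 = (j : ℕ) then 1 else 0)
    (B : Fin n → ℝ) (hB : ∀ i : Fin n, B i = if (i : ℕ) = n - 1 then 1 else 0)
    (u : ℝ → ℝ)
    (f f0 : ℝ → (Fin n → ℝ) → (Fin n → ℝ))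
    (x x0 : ℝ → (Fin n → ℝ))
    (hx : ∀ t ∈ Set.Ico (0 : ℝ) T,
      HasDerivWithinAt x (A *ᵥ x t + u t • B + f t (x t)) (Set.Ico 0 T) t)
    (hx0 : ∀ t ∈ Set.Ico (0 : ℝ) T,
      HasDerivWithinAt x0 (A *ᵥ x0 t + f0 t (x0 t)) (Set.Ico 0 T) t)
    (η Φ : ℝ → (Fin n → ℝ))
    (hη : ∀ t (i : Fin n),
      η t i = (b / (T - t)) ^ (n - (i : ℕ)) * (x t i - x0 t i))
    (hΦ : ∀ t (i : Fin n),
      Φ t i = (b / (T - t)) ^ (n - 1 - (i : ℕ)) * (f t (x t) i - f0 t (x0 t) i))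
    (Dc : Matrix (Fin n) (Fin n) ℝ)
    (hDc : Dc = Matrix.diagonal fun i : Fin n => ((n - (i : ℕ) : ℕ) : ℝ)) :
    ∀ τ ∈ Set.Ici (0 : ℝ),
      HasDerivWithinAt (fun σ => η (T * (1 - Real.exp (-σ))))
        (b • (A *ᵥ η (T * (1 - Real.exp (-τ))) +
              u (T * (1 - Real.exp (-τ))) • B +
              Φ (T * (1 - Real.exp (-τ)))) +
          Dc *ᵥ η (T * (1 - Real.exp (-τ))))
        (Set.Ici 0) τ := by
  intro τ hτ
  rw [show T * (1 - Real.exp (-τ)) = timeReparam T τ from rfl]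
  have ht : timeReparam T τ ∈ Ico 0 T := mapsTo_timeReparam hT hτ
  rw [hasDerivWithinAt_pi]
  intro i
  obtain ⟨k, hk⟩ : ∃ k, n - (i : ℕ) = k + 1 := ⟨n - 1 - i, by omega⟩
  have hk' : n - 1 - (i : ℕ) = k := by omega
  have hfun : (fun σ => η (T * (1 - Real.exp (-σ))) i) = fun σ =>
      (b / (T - timeReparam T σ)) ^ (k + 1) * (x (timeReparam T σ) i - x0 (timeReparam T σ) i) :=
    funext fun σ => by rw [hη, hk]; rfl
  rw [hfun]
  refine (hasDerivWithinAt_scaled_comp_timeReparam hT k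
    (hasDerivWithinAt_pi.mp ((hx _ ht).sub (hx0 _ ht)) i)).congr_deriv ?_
  set t := timeReparam T τ
  set r := b / (T - t)
  have hηt : η t = fun j : Fin n => r ^ (n - (j : ℕ)) * (x t - x0 t) j := funext (hη t)
  have hBi : r ^ k * B i = B i := hk' ▸ pow_mul_lastBasis_apply hB r i
  simp only [Pi.add_apply, Pi.smul_apply, smul_eq_mul, hDc, mulVec_diagonal, hηt,
    shift_mulVec_pow_smul hA, mulVec_sub]
  simp only [Pi.add_apply, Pi.sub_apply, Pi.smul_apply, smul_eq_mul, hΦ, hk, hk']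
  push_cast
  linear_combination b * u t * hBi

/-- Time-axis transformation of the scaled error dynamics (proof of Proposition 1):
with `r(t) = b/(T-t)`, the scaled error `η_i(t) = r(t)^{n-i+1}(x_i(t) - x_{0,i}(t))`
(0-based exponent `n - i`) and scaled uncertainty
`Φ_i(t) = r(t)^{n-i}(f_i(t,x(t)) - f_{0,i}(t,x_0(t)))` (0-based exponent `n-1-i`),
the reparametrization `η̃(τ) = η(t(τ))` with `t(τ) = T(1-e^{-τ})` satisfies
`dη̃/dτ = b (A η̃ + B u + Φ) + D_c η̃` on `[0,∞)`, with `D_c = diag(n,…,1)`. -/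
theorem time_axis_transformation (n : ℕ) (hn : 0 < n)
    (T b : ℝ) (hT : 0 < T) (hb : T ≤ b)
    (A : Matrix (Fin n) (Fin n) ℝ)
    (hA : ∀ i j : Fin n, A i j = if (i : ℕ) + 1 = (j : ℕ) then 1 else 0)
    (B : Fin n → ℝ) (hB : ∀ i : Fin n, B i = if (i : ℕ) = n - 1 then 1 else 0)
    (u : ℝ → ℝ) (hu : ContinuousOn u (Set.Ico 0 T))
    (f f0 : ℝ → (Fin n → ℝ) → (Fin n → ℝ))
    (x x0 : ℝ → (Fin n → ℝ))
    (hx : ∀ t ∈ Set.Ico (0 : ℝ) T,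
      HasDerivWithinAt x (A *ᵥ x t + u t • B + f t (x t)) (Set.Ico 0 T) t)
    (hx0 : ∀ t ∈ Set.Ico (0 : ℝ) T,
      HasDerivWithinAt x0 (A *ᵥ x0 t + f0 t (x0 t)) (Set.Ico 0 T) t)
    (η Φ : ℝ → (Fin n → ℝ))
    (hη : ∀ t (i : Fin n),
      η t i = (b / (T - t)) ^ (n - (i : ℕ)) * (x t i - x0 t i))
    (hΦ : ∀ t (i : Fin n),
      Φ t i = (b / (T - t)) ^ (n - 1 - (i : ℕ)) * (f t (x t) i - f0 t (x0 t) i))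
    (Dc : Matrix (Fin n) (Fin n) ℝ)
    (hDc : Dc = Matrix.diagonal fun i : Fin n => ((n - (i : ℕ) : ℕ) : ℝ)) :
    ∀ τ ∈ Set.Ici (0 : ℝ),
      HasDerivWithinAt (fun σ => η (T * (1 - Real.exp (-σ))))
        (b • (A *ᵥ η (T * (1 - Real.exp (-τ))) +
              u (T * (1 - Real.exp (-τ))) • B +
              Φ (T * (1 - Real.exp (-τ)))) +
          Dc *ᵥ η (T * (1 - Real.exp (-τ))))
        (Set.Ici 0) τ :=
  time_axis_transformation_general n T b hT A hA B hB u f f0 x x0 hx hx0 η Φ hη hΦ Dc hDc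
end

section
/- Lemma 1, part 2 (matrix pencil): Let Q_1, Q_2 ∈ ℝ^{m×m} both be symmetric negative definite. If s ∈ ℝ is such that s < t for every real number t with det(Q_1 − t·Q_2) = 0, then the matrix Q_1 − s·Q_2 is symmetric negative definite. -/
/-!
Since `Q₂` is negative definite, the generalized Rayleigh quotient `ηᵀQ₁η / ηᵀQ₂η` attains its
minimum `T` at some `η₀ ≠ 0`. Then `Q₁ - T Q₂` is negative semidefinite with `η₀` in its kernel,
so `T` is a generalized eigenvalue and `s < T`. Finally
`Q₁ - s Q₂ = (Q₁ - T Q₂) + (T - s) Q₂` is negative semidefinite plus negative definite.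
-/

open Matrix

namespace Matrix

variable {n : Type*} [Fintype n]

lemma dotProduct_sub_smul_mulVec (A B : Matrix n n ℝ) (t : ℝ) (η : n → ℝ) :
    η ⬝ᵥ ((A - t • B) *ᵥ η) = η ⬝ᵥ (A *ᵥ η) - t * η ⬝ᵥ (B *ᵥ η) := by
  rw [sub_mulVec, dotProduct_sub, smul_mulVec, dotProduct_smul, smul_eq_mul]

lemma IsSymm.mulVec_eq_zero_of_dotProduct_mulVec_eq_zero {M : Matrix n n ℝ} (hM : M.IsSymm)
    (hle : ∀ v, v ⬝ᵥ (M *ᵥ v) ≤ 0) {η : n → ℝ} (h0 : η ⬝ᵥ (M *ᵥ η) = 0) : M *ᵥ η = 0 := by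
  have hpsd : (-M).PosSemidef :=
    .of_dotProduct_mulVec_nonneg (isHermitian_iff_isSymm.mpr hM.neg) fun v => by
      simpa [neg_mulVec] using hle v
  simpa [neg_mulVec] using (hpsd.dotProduct_mulVec_zero_iff η).mp (by simp [neg_mulVec, h0])

noncomputable def genRayleighQuotient (A B : Matrix n n ℝ) (η : n → ℝ) : ℝ :=
  η ⬝ᵥ (A *ᵥ η) / η ⬝ᵥ (B *ᵥ η)

lemma dotProduct_mulVec_smul (M : Matrix n n ℝ) (c : ℝ) (η : n → ℝ) :
    (c • η) ⬝ᵥ (M *ᵥ (c • η)) = c ^ 2 * η ⬝ᵥ (M *ᵥ η) := by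
  rw [mulVec_smul, smul_dotProduct, dotProduct_smul, smul_eq_mul, smul_eq_mul]; ring

lemma genRayleighQuotient_smul (A B : Matrix n n ℝ) {c : ℝ} (hc : c ≠ 0) (η : n → ℝ) :
    genRayleighQuotient A B (c • η) = genRayleighQuotient A B η := by
  simp only [genRayleighQuotient, dotProduct_mulVec_smul]
  exact mul_div_mul_left _ _ (pow_ne_zero 2 hc)

lemma continuous_dotProduct_mulVec (M : Matrix n n ℝ) :
    Continuous fun η : n → ℝ => η ⬝ᵥ (M *ᵥ η) := by
  simp only [dotProduct, mulVec]
  fun_prop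

lemma exists_forall_genRayleighQuotient_le [Nonempty n] (A B : Matrix n n ℝ)
    (hB : ∀ η ≠ 0, η ⬝ᵥ (B *ᵥ η) ≠ 0) :
    ∃ η₀ ≠ 0, ∀ η ≠ 0, genRayleighQuotient A B η₀ ≤ genRayleighQuotient A B η := by
  have hsphere : ∀ η ∈ Metric.sphere (0 : n → ℝ) 1, η ≠ 0 := fun η hη =>
    ne_zero_of_mem_unit_sphere (⟨η, hη⟩ : Metric.sphere (0 : n → ℝ) 1)
  obtain ⟨η₀, hη₀, hmin⟩ := (isCompact_sphere (0 : n → ℝ) 1).exists_isMinOn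
    (NormedSpace.sphere_nonempty.mpr zero_le_one)
    ((continuous_dotProduct_mulVec A).continuousOn.div (continuous_dotProduct_mulVec B).continuousOn
      fun η hη => hB η (hsphere η hη))
  refine ⟨η₀, hsphere η₀ hη₀, fun η hη => ?_⟩
  -- the quotient is homogeneous of degree 0, so minimizing over the unit sphere suffices
  have hnorm : ‖η‖ ≠ 0 := norm_ne_zero_iff.mpr hη
  rw [← genRayleighQuotient_smul A B (inv_ne_zero hnorm) η]
  exact hmin (by simp [norm_smul, hnorm])

theorem exists_det_sub_smul_eq_zero_and_negSemidef [DecidableEq n] [Nonempty n]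
    {A B : Matrix n n ℝ}
    (hA : A.IsSymm) (hB : B.IsSymm) (hBneg : ∀ η ≠ 0, η ⬝ᵥ (B *ᵥ η) < 0) :
    ∃ T : ℝ, (A - T • B).det = 0 ∧ ∀ η, η ⬝ᵥ ((A - T • B) *ᵥ η) ≤ 0 := by
  obtain ⟨η₀, hη₀, hmin⟩ := exists_forall_genRayleighQuotient_le A B fun η hη => (hBneg η hη).ne
  set T := genRayleighQuotient A B η₀
  have hsemidef : ∀ η, η ⬝ᵥ ((A - T • B) *ᵥ η) ≤ 0 := by
    intro η
    rcases eq_or_ne η 0 with rfl | hη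
    · simp
    have hT := (le_div_iff_of_neg (hBneg η hη)).mp (hmin η hη)
    rw [dotProduct_sub_smul_mulVec]
    linarith
  have hkernel : η₀ ⬝ᵥ ((A - T • B) *ᵥ η₀) = 0 := by
    rw [dotProduct_sub_smul_mulVec, sub_eq_zero]
    exact (div_mul_cancel₀ _ (hBneg η₀ hη₀).ne).symm
  refine ⟨T, exists_mulVec_eq_zero_iff.mp ⟨η₀, hη₀, ?_⟩, hsemidef⟩
  exact (hA.sub (hB.smul T)).mulVec_eq_zero_of_dotProduct_mulVec_eq_zero hsemidef hkernel

end Matrix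

theorem matrix_pencil_part2_general {m : ℕ} (Q1 Q2 : Matrix (Fin m) (Fin m) ℝ)
    (hQ1symm : Q1.IsSymm) (hQ2symm : Q2.IsSymm)
    (hQ2neg : ∀ η : Fin m → ℝ, η ≠ 0 → η ⬝ᵥ (Q2 *ᵥ η) < 0)
    (s : ℝ)
    (hs : ∀ t : ℝ, (Q1 - t • Q2).det = 0 → s < t) :
    (Q1 - s • Q2).IsSymm ∧
      ∀ η : Fin m → ℝ, η ≠ 0 → η ⬝ᵥ ((Q1 - s • Q2) *ᵥ η) < 0 := by
  refine ⟨hQ1symm.sub (hQ2symm.smul s), fun η hη => ?_⟩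
  obtain ⟨i, -⟩ := Function.ne_iff.mp hη
  have : Nonempty (Fin m) := ⟨i⟩
  obtain ⟨T, hdet, hsemidef⟩ := exists_det_sub_smul_eq_zero_and_negSemidef hQ1symm hQ2symm hQ2neg
  have hsT := hs T hdet
  have hT := hsemidef η
  rw [dotProduct_sub_smul_mulVec] at hT ⊢
  linarith [mul_neg_of_pos_of_neg (sub_pos.mpr hsT) (hQ2neg η hη)]

/-- Lemma 1, part 2 (matrix pencil): if `Q₁` and `Q₂` are both symmetric negative
definite, and `s` is smaller than every generalized eigenvalue of the pencil
`Q₁ - t•Q₂` (i.e. `s < t` for every real `t` with `det (Q₁ - t•Q₂) = 0`), then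
`Q₁ - s•Q₂` is symmetric negative definite. -/
theorem matrix_pencil_part2 {m : ℕ} (Q1 Q2 : Matrix (Fin m) (Fin m) ℝ)
    (hQ1symm : Q1.IsSymm) (hQ2symm : Q2.IsSymm)
    (hQ1neg : ∀ η : Fin m → ℝ, η ≠ 0 → η ⬝ᵥ (Q1 *ᵥ η) < 0)
    (hQ2neg : ∀ η : Fin m → ℝ, η ≠ 0 → η ⬝ᵥ (Q2 *ᵥ η) < 0)
    (s : ℝ)
    (hs : ∀ t : ℝ, (Q1 - t • Q2).det = 0 → s < t) :
    (Q1 - s • Q2).IsSymm ∧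
      ∀ η : Fin m → ℝ, η ≠ 0 → η ⬝ᵥ ((Q1 - s • Q2) *ᵥ η) < 0 :=
  matrix_pencil_part2_general Q1 Q2 hQ1symm hQ2symm hQ2neg s hs
end
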